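/- arXiv:1211.3164 — 6 statements merged into one kernel-verified Lean document; each statement's English description precedes it below -/
import Mathlib

section
/- Let F be a left-continuous Wardowski function and a > 0, and let φ(t) = sup { s ≥ 0 : a + F(s) ≤ F(t) }. Then for every t > 0 with φ(t) > 0, one has a + F(φ(t)) ≤ F(t); in particular φ(t) < t for all t > 0. -/
/-!
By monotonicity, the sublevel set `{s ≥ 0 | a + F s ≤ F t}` is an initial segment of `[0, ∞)`,
so `a + F s ≤ F t` for every `s` to the left of its supremum `φ t`, and left continuity carries
the inequality over to `φ t` itself. Since `x < a + x` for finite `x`, the sublevel set lies in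
`[0, t]`, and `φ t = t` would give `a + F t ≤ F t`.
-/

open Filter Set Topology

theorem EReal.lt_coe_add_self {a : ℝ} (ha : 0 < a) {x : EReal} (hbot : x ≠ ⊥) (htop : x ≠ ⊤) :
    x < a + x := by
  simpa using EReal.add_lt_add_of_lt_of_le (EReal.coe_pos.2 ha) le_rfl hbot htop

theorem EReal.tendsto_coe_add {β : Type*} {l : Filter β} {f : β → EReal} {x : EReal} (a : ℝ)
    (hf : Tendsto f l (𝓝 x)) : Tendsto (fun b => (a : EReal) + f b) l (𝓝 (a + x)) :=
  (EReal.continuousAt_add (p := ((a : EReal), x)) (.inl (EReal.coe_ne_top a))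
    (.inl (EReal.coe_ne_bot a))).tendsto.comp (tendsto_const_nhds.prodMk_nhds hf)

theorem MonotoneOn.map_sSup_sublevel_le {α : Type*} [LinearOrder α] [TopologicalSpace α]
    [ClosedIicTopology α] {G : ℝ → α} {c : α} (hG : MonotoneOn G (Ici 0))
    (hpos : 0 < sSup {s | 0 ≤ s ∧ G s ≤ c})
    (hlc : Tendsto G (𝓝[<] sSup {s | 0 ≤ s ∧ G s ≤ c}) (𝓝 (G (sSup {s | 0 ≤ s ∧ G s ≤ c})))) :
    G (sSup {s | 0 ≤ s ∧ G s ≤ c}) ≤ c := by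
  set S := {s | 0 ≤ s ∧ G s ≤ c}
  have hne : S.Nonempty := nonempty_iff_ne_empty.2 fun h => by simp [h] at hpos
  refine le_of_tendsto hlc ?_
  filter_upwards [Ioo_mem_nhdsLT hpos] with s hs
  obtain ⟨s', hs', hss'⟩ := exists_lt_of_lt_csSup hne hs.2
  exact (hG hs.1.le hs'.1 hss'.le).trans hs'.2

theorem sublevel_coe_add_subset_Iic {F : ℝ → EReal} {a t : ℝ} (ha : 0 < a)
    (hfin : ∀ s, 0 ≤ s → F s < ⊤) (hne_bot : ∀ s, 0 < s → F s ≠ ⊥)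
    (hF : StrictMonoOn F (Ici 0)) (ht : 0 ≤ t) :
    {s | 0 ≤ s ∧ (a : EReal) + F s ≤ F t} ⊆ Iic t := by
  rintro s ⟨hs0, hs⟩
  rw [mem_Iic]
  by_contra! hts
  exact (hs.trans (hF ht hs0 hts).le).not_gt
    (EReal.lt_coe_add_self ha (hne_bot s (ht.trans_lt hts)) (hfin s hs0).ne)

theorem wardowski_leftCont_phi_ineq_general
    (F : ℝ → EReal)
    (hfin : ∀ t, 0 ≤ t → F t < ⊤)
    (hbot : ∀ t, 0 ≤ t → (F t = ⊥ ↔ t = 0))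
    (hmono : ∀ s t, 0 ≤ s → s < t → F s < F t)
    (hlc : ∀ t : ℝ, 0 < t → Tendsto F (nhdsWithin t (Set.Iio t)) (nhds (F t)))
    (a : ℝ) (ha : 0 < a)
    (φ : ℝ → ℝ) (hφ : ∀ t, φ t = sSup {s : ℝ | 0 ≤ s ∧ (a : EReal) + F s ≤ F t}) :
    (∀ t, 0 < t → 0 < φ t → (a : EReal) + F (φ t) ≤ F t) ∧
    (∀ t, 0 < t → φ t < t) := by
  have hF : StrictMonoOn F (Ici 0) := fun s hs t _ hst => hmono s t hs hst
  have hne_bot : ∀ t, 0 < t → F t ≠ ⊥ := fun t ht h => ht.ne' ((hbot t ht.le).1 h)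
  have key : ∀ t, 0 < φ t → (a : EReal) + F (φ t) ≤ F t := by
    intro t hφt
    rw [hφ] at hφt ⊢
    exact (hF.monotoneOn.const_add (a : EReal)).map_sSup_sublevel_le hφt
      (EReal.tendsto_coe_add a (hlc _ hφt))
  refine ⟨fun t _ => key t, fun t ht => ?_⟩
  have hzero_mem : (0 : ℝ) ∈ {s | 0 ≤ s ∧ (a : EReal) + F s ≤ F t} := by
    simp [(hbot 0 le_rfl).2 rfl]
  have hle : φ t ≤ t := hφ t ▸
    csSup_le ⟨0, hzero_mem⟩ (sublevel_coe_add_subset_Iic ha hfin hne_bot hF ht.le)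
  refine hle.lt_of_ne fun h => ?_
  have hself := key t (by rwa [h])
  rw [h] at hself
  exact hself.not_gt (EReal.lt_coe_add_self ha (hne_bot t ht) (hfin t ht.le).ne)

/-- For a left-continuous Wardowski function `F` and `a > 0`, with
`φ t = sup {s ≥ 0 : a + F s ≤ F t}`, for every `t > 0` with `φ t > 0` one has
`a + F (φ t) ≤ F t`; in particular `φ t < t` for all `t > 0`. -/
theorem wardowski_leftCont_phi_ineq
    (F : ℝ → EReal)
    (hfin : ∀ t, 0 ≤ t → F t < ⊤)
    (hbot : ∀ t, 0 ≤ t → (F t = ⊥ ↔ t = 0))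
    (hmono : ∀ s t, 0 ≤ s → s < t → F s < F t)
    (hlim : Tendsto F (nhdsWithin 0 (Set.Ioi 0)) (nhds ⊥))
    (hlc : ∀ t : ℝ, 0 < t → Tendsto F (nhdsWithin t (Set.Iio t)) (nhds (F t)))
    (a : ℝ) (ha : 0 < a)
    (φ : ℝ → ℝ) (hφ : ∀ t, φ t = sSup {s : ℝ | 0 ≤ s ∧ (a : EReal) + F s ≤ F t}) :
    (∀ t, 0 < t → 0 < φ t → (a : EReal) + F (φ t) ≤ F t) ∧
    (∀ t, 0 < t → φ t < t) :=
  wardowski_leftCont_phi_ineq_general F hfin hbot hmono hlc a ha φ hφ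
end

section
/- Let F be a left-continuous Wardowski function and a > 0, and let φ(t) = sup { s ≥ 0 : a + F(s) ≤ F(t) }. Then φ is increasing, regressive (φ(0) = 0 and φ(t) < t for t > 0), and Matkowski admissible: φⁿ(t) → 0 as n → ∞ for each t ≥ 0. -/
/-!
Left-continuity of `F` shows that the supremum defining `φ t` is attained:
`a + F (φ t) ≤ F t`. Since `F` is finite on `(0, ∞)` and `a > 0`, this forces `φ t < t`.
If the decreasing iterates `φⁿ t` stayed above some `L > 0`, the finite values `F (φⁿ t)`
would drop by at least `a` at every step while staying above `F L`, which is absurd.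
-/

open Filter Set Topology

theorem EReal.coe_add_toReal_le {a : ℝ} {x y : EReal} (hx : x ≠ ⊥) (hx' : x ≠ ⊤) (hy : y ≠ ⊤)
    (h : (a : EReal) + x ≤ y) : a + x.toReal ≤ y.toReal := by
  lift x to ℝ using ⟨hx', hx⟩
  lift y to ℝ using ⟨hy, ne_bot_of_le_ne_bot (EReal.coe_add a x ▸ EReal.coe_ne_bot _) h⟩
  simpa using (by exact_mod_cast h : a + x ≤ y)

theorem not_bddBelow_range_of_add_le {w : ℕ → ℝ} {a : ℝ} (ha : 0 < a)
    (hw : ∀ n, w (n + 1) + a ≤ w n) : ¬ BddBelow (range w) := by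
  have hdrop : ∀ n : ℕ, w n + n * a ≤ w 0 := by
    intro n
    induction n with
    | zero => simp
    | succ n ih => push_cast; linarith [hw n]
  rintro ⟨c, hc⟩
  obtain ⟨n, hn⟩ := exists_nat_gt ((w 0 - c) / a)
  rw [div_lt_iff₀ ha] at hn
  linarith [hc ⟨n, rfl⟩, hdrop n]

theorem coe_add_le_of_forall_mem_Ioo {F : ℝ → EReal} {a s : ℝ} {c : EReal}
    (hlc : Tendsto F (𝓝[<] s) (𝓝 (F s))) (hs : 0 < s)
    (h : ∀ u ∈ Ioo 0 s, (a : EReal) + F u ≤ c) : (a : EReal) + F s ≤ c := by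
  have hadd : Tendsto (fun u => (a : EReal) + F u) (𝓝[<] s) (𝓝 ((a : EReal) + F s)) :=
    (EReal.continuousAt_add (.inl (EReal.coe_ne_top a)) (.inl (EReal.coe_ne_bot a))).tendsto.comp
      (tendsto_const_nhds.prodMk_nhds hlc)
  exact le_of_tendsto hadd (eventually_of_mem (Ioo_mem_nhdsLT hs) h)

def wardowskiSet (F : ℝ → EReal) (a t : ℝ) : Set ℝ :=
  {s | 0 ≤ s ∧ (a : EReal) + F s ≤ F t}

noncomputable def wardowskiPhi (F : ℝ → EReal) (a t : ℝ) : ℝ :=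
  sSup (wardowskiSet F a t)

section

variable {F : ℝ → EReal} {a s t : ℝ}

theorem zero_mem_wardowskiSet (hF0 : F 0 = ⊥) (t : ℝ) : 0 ∈ wardowskiSet F a t :=
  ⟨le_rfl, by simp [hF0]⟩

theorem le_of_mem_wardowskiSet (hF : StrictMonoOn F (Ici 0))
    (hreal : ∀ t, 0 < t → F t ≠ ⊥ ∧ F t ≠ ⊤) (ha : 0 < a) (ht : 0 ≤ t)
    (hs : s ∈ wardowskiSet F a t) : s ≤ t := by
  by_contra! hts
  have hs0 : 0 < s := ht.trans_lt hts
  obtain ⟨hbot, htop⟩ := hreal s hs0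
  have := EReal.coe_add_toReal_le hbot htop htop (hs.2.trans (hF ht hs0.le hts).le)
  linarith

theorem bddAbove_wardowskiSet (hF : StrictMonoOn F (Ici 0))
    (hreal : ∀ t, 0 < t → F t ≠ ⊥ ∧ F t ≠ ⊤) (ha : 0 < a) (ht : 0 ≤ t) :
    BddAbove (wardowskiSet F a t) :=
  ⟨t, fun _ hs => le_of_mem_wardowskiSet hF hreal ha ht hs⟩

theorem wardowskiPhi_nonneg (hF0 : F 0 = ⊥) (hF : StrictMonoOn F (Ici 0))
    (hreal : ∀ t, 0 < t → F t ≠ ⊥ ∧ F t ≠ ⊤) (ha : 0 < a) (ht : 0 ≤ t) :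
    0 ≤ wardowskiPhi F a t :=
  le_csSup (bddAbove_wardowskiSet hF hreal ha ht) (zero_mem_wardowskiSet hF0 t)

theorem wardowskiPhi_le (hF0 : F 0 = ⊥) (hF : StrictMonoOn F (Ici 0))
    (hreal : ∀ t, 0 < t → F t ≠ ⊥ ∧ F t ≠ ⊤) (ha : 0 < a) (ht : 0 ≤ t) :
    wardowskiPhi F a t ≤ t :=
  csSup_le ⟨0, zero_mem_wardowskiSet hF0 t⟩ fun _ hs => le_of_mem_wardowskiSet hF hreal ha ht hs

theorem wardowskiPhi_zero (hF0 : F 0 = ⊥) (hF : StrictMonoOn F (Ici 0))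
    (hreal : ∀ t, 0 < t → F t ≠ ⊥ ∧ F t ≠ ⊤) (ha : 0 < a) : wardowskiPhi F a 0 = 0 :=
  (wardowskiPhi_le hF0 hF hreal ha le_rfl).antisymm (wardowskiPhi_nonneg hF0 hF hreal ha le_rfl)

theorem wardowskiPhi_monotoneOn (hF0 : F 0 = ⊥) (hF : StrictMonoOn F (Ici 0))
    (hreal : ∀ t, 0 < t → F t ≠ ⊥ ∧ F t ≠ ⊤) (ha : 0 < a) :
    MonotoneOn (wardowskiPhi F a) (Ici 0) := fun _ ht₁ _ ht₂ h₁₂ =>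
  csSup_le_csSup (bddAbove_wardowskiSet hF hreal ha ht₂) ⟨0, zero_mem_wardowskiSet hF0 _⟩
    fun _ hs => ⟨hs.1, hs.2.trans (hF.monotoneOn ht₁ ht₂ h₁₂)⟩

theorem coe_add_wardowskiPhi_le (hF0 : F 0 = ⊥) (hF : StrictMonoOn F (Ici 0))
    (hreal : ∀ t, 0 < t → F t ≠ ⊥ ∧ F t ≠ ⊤) (ha : 0 < a)
    (hlc : ∀ t, 0 < t → Tendsto F (𝓝[<] t) (𝓝 (F t))) (ht : 0 ≤ t) :
    (a : EReal) + F (wardowskiPhi F a t) ≤ F t := by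
  rcases (wardowskiPhi_nonneg hF0 hF hreal ha ht).eq_or_lt with hzero | hpos
  · simp [← hzero, hF0]
  refine coe_add_le_of_forall_mem_Ioo (hlc _ hpos) hpos fun u hu => ?_
  obtain ⟨s, hs, hus⟩ := exists_lt_of_lt_csSup ⟨0, zero_mem_wardowskiSet hF0 t⟩ hu.2
  calc (a : EReal) + F u ≤ a + F s := by gcongr; exact hF.monotoneOn hu.1.le hs.1 hus.le
    _ ≤ F t := hs.2

theorem wardowskiPhi_lt (hF0 : F 0 = ⊥) (hF : StrictMonoOn F (Ici 0))
    (hreal : ∀ t, 0 < t → F t ≠ ⊥ ∧ F t ≠ ⊤) (ha : 0 < a)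
    (hlc : ∀ t, 0 < t → Tendsto F (𝓝[<] t) (𝓝 (F t))) (ht : 0 < t) :
    wardowskiPhi F a t < t := by
  refine (wardowskiPhi_le hF0 hF hreal ha ht.le).lt_of_ne fun heq => ?_
  have hkey := coe_add_wardowskiPhi_le hF0 hF hreal ha hlc ht.le
  rw [heq] at hkey
  obtain ⟨hbot, htop⟩ := hreal t ht
  linarith [EReal.coe_add_toReal_le hbot htop htop hkey]

theorem exists_iterate_wardowskiPhi_lt (hF0 : F 0 = ⊥) (hF : StrictMonoOn F (Ici 0))
    (hreal : ∀ t, 0 < t → F t ≠ ⊥ ∧ F t ≠ ⊤) (ha : 0 < a)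
    (hlc : ∀ t, 0 < t → Tendsto F (𝓝[<] t) (𝓝 (F t))) {L : ℝ} (hL : 0 < L) :
    ∃ n, (wardowskiPhi F a)^[n] t < L := by
  by_contra! hge
  have hpos : ∀ n, 0 < (wardowskiPhi F a)^[n] t := fun n => hL.trans_le (hge n)
  refine not_bddBelow_range_of_add_le ha (w := fun n => (F ((wardowskiPhi F a)^[n] t)).toReal)
    (fun n => ?_) ⟨(F L).toReal, ?_⟩
  · have hstep := coe_add_wardowskiPhi_le hF0 hF hreal ha hlc (hpos n).le
    rw [← Function.iterate_succ_apply' (wardowskiPhi F a)] at hstep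
    have := EReal.coe_add_toReal_le (hreal _ (hpos (n + 1))).1 (hreal _ (hpos (n + 1))).2
      (hreal _ (hpos n)).2 hstep
    linarith
  · rintro _ ⟨n, rfl⟩
    exact EReal.toReal_le_toReal (hF.monotoneOn hL.le (hpos n).le (hge n)) (hreal L hL).1
      (hreal _ (hpos n)).2

theorem tendsto_iterate_wardowskiPhi (hF0 : F 0 = ⊥) (hF : StrictMonoOn F (Ici 0))
    (hreal : ∀ t, 0 < t → F t ≠ ⊥ ∧ F t ≠ ⊤) (ha : 0 < a)
    (hlc : ∀ t, 0 < t → Tendsto F (𝓝[<] t) (𝓝 (F t))) (ht : 0 ≤ t) :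
    Tendsto (fun n => (wardowskiPhi F a)^[n] t) atTop (𝓝 0) := by
  have hmaps : MapsTo (wardowskiPhi F a) (Ici 0) (Ici 0) := fun _ hs =>
    wardowskiPhi_nonneg hF0 hF hreal ha hs
  have hnonneg : ∀ n, 0 ≤ (wardowskiPhi F a)^[n] t := fun n => hmaps.iterate n ht
  have hanti : Antitone fun n => (wardowskiPhi F a)^[n] t := antitone_nat_of_succ_le fun n => by
    rw [Function.iterate_succ_apply']
    exact wardowskiPhi_le hF0 hF hreal ha (hnonneg n)
  refine tendsto_order.2 ⟨fun ε hε => .of_forall fun n => hε.trans_le (hnonneg n), fun ε hε => ?_⟩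
  obtain ⟨N, hN⟩ := exists_iterate_wardowskiPhi_lt (t := t) hF0 hF hreal ha hlc hε
  exact eventually_atTop.2 ⟨N, fun n hn => (hanti hn).trans_lt hN⟩

end

theorem wardowski_leftCont_phi_matkowski_general
    (F : ℝ → EReal)
    (hfin : ∀ t, 0 ≤ t → F t < ⊤)
    (hbot : ∀ t, 0 ≤ t → (F t = ⊥ ↔ t = 0))
    (hmono : ∀ s t, 0 ≤ s → s < t → F s < F t)
    (hlc : ∀ t : ℝ, 0 < t → Tendsto F (nhdsWithin t (Set.Iio t)) (nhds (F t)))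
    (a : ℝ) (ha : 0 < a)
    (φ : ℝ → ℝ) (hφ : ∀ t, φ t = sSup {s : ℝ | 0 ≤ s ∧ (a : EReal) + F s ≤ F t}) :
    (∀ t₁ t₂, 0 ≤ t₁ → t₁ ≤ t₂ → φ t₁ ≤ φ t₂) ∧
    φ 0 = 0 ∧ (∀ t, 0 < t → φ t < t) ∧
    (∀ t, 0 ≤ t → Tendsto (fun n => φ^[n] t) atTop (nhds 0)) := by
  have hF : StrictMonoOn F (Ici 0) := fun s hs t _ hst => hmono s t hs hst
  have hF0 : F 0 = ⊥ := (hbot 0 le_rfl).2 rfl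
  have hreal : ∀ t, 0 < t → F t ≠ ⊥ ∧ F t ≠ ⊤ := fun t ht =>
    ⟨fun h => ht.ne' ((hbot t ht.le).1 h), (hfin t ht.le).ne⟩
  obtain rfl : φ = wardowskiPhi F a := funext hφ
  exact ⟨fun t₁ t₂ h₁ h₁₂ => wardowskiPhi_monotoneOn hF0 hF hreal ha h₁ (h₁.trans h₁₂) h₁₂,
    wardowskiPhi_zero hF0 hF hreal ha, fun _ ht => wardowskiPhi_lt hF0 hF hreal ha hlc ht,
    fun _ ht => tendsto_iterate_wardowskiPhi hF0 hF hreal ha hlc ht⟩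

/-- For a left-continuous Wardowski function `F` and `a > 0`, the
function `φ t = sup {s ≥ 0 : a + F s ≤ F t}` is increasing on `[0,∞)`, regressive
(`φ 0 = 0` and `φ t < t` for `t > 0`), and Matkowski admissible:
`φⁿ t → 0` as `n → ∞` for each `t ≥ 0`. -/
theorem wardowski_leftCont_phi_matkowski
    (F : ℝ → EReal)
    (hfin : ∀ t, 0 ≤ t → F t < ⊤)
    (hbot : ∀ t, 0 ≤ t → (F t = ⊥ ↔ t = 0))
    (hmono : ∀ s t, 0 ≤ s → s < t → F s < F t)
    (hlim : Tendsto F (nhdsWithin 0 (Set.Ioi 0)) (nhds ⊥))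
    (hlc : ∀ t : ℝ, 0 < t → Tendsto F (nhdsWithin t (Set.Iio t)) (nhds (F t)))
    (a : ℝ) (ha : 0 < a)
    (φ : ℝ → ℝ) (hφ : ∀ t, φ t = sSup {s : ℝ | 0 ≤ s ∧ (a : EReal) + F s ≤ F t}) :
    (∀ t₁ t₂, 0 ≤ t₁ → t₁ ≤ t₂ → φ t₁ ≤ φ t₂) ∧
    φ 0 = 0 ∧ (∀ t, 0 < t → φ t < t) ∧
    (∀ t, 0 ≤ t → Tendsto (fun n => φ^[n] t) atTop (nhds 0)) :=
  wardowski_leftCont_phi_matkowski_general F hfin hbot hmono hlc a ha φ hφ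
end

section
/- Let (x_n) be a sequence in a metric space (X,d) such that d(x_n, x_{n+1}) → 0 but (x_n) is not Cauchy, and let Δ ⊆ (0,∞) be countable. Then there exist η ∈ (0,∞) \ Δ and strictly increasing rank sequences m(j), n(j) with j ≤ m(j) < n(j), d(x_{m(j)}, x_{n(j)}) > η for all j, and d(x_{m(j)}, x_{n(j)}) → η as j → ∞. -/
open Filter

/-- If `(x n)` is semi-Cauchy (`d(x n, x (n+1)) → 0`) but not Cauchy
in a metric space, and `Δ ⊆ (0,∞)` is countable, then there exist
`η ∈ (0,∞) \ Δ` and strictly increasing rank sequences `m, n` with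
`j ≤ m j < n j`, `d(x (m j), x (n j)) > η` for all `j`, and
`d(x (m j), x (n j)) → η`. -/
theorem semiCauchy_not_cauchy_ranks
    {X : Type*} [MetricSpace X] (x : ℕ → X)
    (hsemi : Tendsto (fun n => dist (x n) (x (n + 1))) atTop (nhds 0))
    (hnc : ¬ CauchySeq x)
    (Δ : Set ℝ) (hΔc : Δ.Countable) (hΔ : Δ ⊆ Set.Ioi 0) :
    ∃ η : ℝ, η ∈ Set.Ioi (0:ℝ) \ Δ ∧
      ∃ m n : ℕ → ℕ, StrictMono m ∧ StrictMono n ∧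
        (∀ j, j ≤ m j ∧ m j < n j ∧ η < dist (x (m j)) (x (n j))) ∧
        Tendsto (fun j => dist (x (m j)) (x (n j))) atTop (nhds η) := by
  rw [Metric.cauchySeq_iff] at hnc
  push_neg at hnc
  obtain ⟨ε, hε, H⟩ := hnc
  -- reorder so that the first index is smaller
  have H' : ∀ Nb : ℕ, ∃ p : ℕ × ℕ, Nb ≤ p.1 ∧ p.1 < p.2 ∧ ε ≤ dist (x p.1) (x p.2) := by
    intro Nb
    obtain ⟨a, ha, b, hb, hab⟩ := H Nb
    rcases lt_trichotomy a b with h | h | h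
    · exact ⟨(a, b), ha, h, hab⟩
    · subst h; simp at hab; linarith
    · exact ⟨(b, a), hb, h, by rwa [dist_comm]⟩
  -- choose η ∈ (0, ε) \ Δ
  have hne : (Set.Ioo (0:ℝ) ε).Nonempty := Set.nonempty_Ioo.2 hε
  obtain ⟨η, hηc, hηIoo⟩ := (hΔc.dense_compl ℝ).exists_mem_open isOpen_Ioo hne
  obtain ⟨hη0, hηε⟩ := hηIoo
  -- control on consecutive distances
  rw [Metric.tendsto_atTop] at hsemi
  have hNex : ∀ j : ℕ, ∃ Nj : ℕ, ∀ k ≥ Nj, dist (x k) (x (k+1)) < 1/((j:ℝ)+1) := by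
    intro j
    obtain ⟨Nj, hNj⟩ := hsemi (1/((j:ℝ)+1)) (by positivity)
    exact ⟨Nj, fun k hk => by
      have := hNj k hk
      rwa [Real.dist_eq, sub_zero, abs_of_nonneg dist_nonneg] at this⟩
  choose N hN using hNex
  -- key step: at any stage we can find a good pair
  have key : ∀ j L : ℕ, ∃ p : ℕ × ℕ, L ≤ p.1 ∧ j ≤ p.1 ∧ p.1 < p.2 ∧
      η < dist (x p.1) (x p.2) ∧ dist (x p.1) (x p.2) ≤ η + 1/((j:ℝ)+1) := by
    intro j L
    obtain ⟨⟨a, b⟩, ha, hab, hd⟩ := H' (max L (max j (N j)))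
    simp only [max_le_iff] at ha
    obtain ⟨haL, haj, haN⟩ := ha
    have hex : ∃ k, a < k ∧ η < dist (x a) (x k) := ⟨b, hab, lt_of_lt_of_le hηε hd⟩
    set n := Nat.find hex with hn
    obtain ⟨hn1, hn2⟩ := Nat.find_spec hex
    have hn0 : 1 ≤ n := by omega
    have hprev : dist (x a) (x (n-1)) ≤ η := by
      rcases eq_or_lt_of_le (Nat.le_sub_one_of_lt hn1) with h | h
      · rw [← h, dist_self]; exact le_of_lt hη0
      · have := Nat.find_min hex (m := n - 1) (by omega)
        push_neg at this
        exact this h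
    have hstep : dist (x (n-1)) (x n) < 1/((j:ℝ)+1) := by
      have : n - 1 + 1 = n := by omega
      rw [← this]
      exact hN j (n-1) (by omega)
    refine ⟨(a, n), haL, haj, hn1, hn2, ?_⟩
    calc dist (x a) (x n) ≤ dist (x a) (x (n-1)) + dist (x (n-1)) (x n) := dist_triangle _ _ _
      _ ≤ η + 1/((j:ℝ)+1) := add_le_add hprev hstep.le
  choose P hP1 hP2 hP3 hP4 hP5 using key
  -- recursive construction
  let g : ℕ → ℕ × ℕ := fun j => Nat.rec (P 0 0) (fun j prev => P (j+1) prev.2) j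
  have hg0 : g 0 = P 0 0 := rfl
  have hgs : ∀ j, g (j+1) = P (j+1) (g j).2 := fun j => rfl
  set m : ℕ → ℕ := fun j => (g j).1 with hm
  set n : ℕ → ℕ := fun j => (g j).2 with hnn
  have hjm : ∀ j, j ≤ m j := by
    intro j
    cases j with
    | zero => exact Nat.zero_le _
    | succ k => exact hP2 (k+1) (g k).2
  have hmn : ∀ j, m j < n j := by
    intro j
    cases j with
    | zero => exact hP3 0 0
    | succ k => exact hP3 (k+1) (g k).2
  have hnm : ∀ j, n j ≤ m (j+1) := fun j => hP1 (j+1) (g j).2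
  have hdist : ∀ j, η < dist (x (m j)) (x (n j)) := by
    intro j
    cases j with
    | zero => exact hP4 0 0
    | succ k => exact hP4 (k+1) (g k).2
  have hdist2 : ∀ j, dist (x (m j)) (x (n j)) ≤ η + 1/((j:ℝ)+1) := by
    intro j
    cases j with
    | zero => exact hP5 0 0
    | succ k => exact hP5 (k+1) (g k).2
  refine ⟨η, ⟨hη0, hηc⟩, m, n, ?_, ?_, fun j => ⟨hjm j, hmn j, hdist j⟩, ?_⟩
  · exact strictMono_nat_of_lt_succ fun j => lt_of_lt_of_le (hmn j) (hnm j)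
  · exact strictMono_nat_of_lt_succ fun j => lt_of_le_of_lt (hnm j) (hmn (j+1))
  · have hupper : Tendsto (fun j : ℕ => η + 1/((j:ℝ)+1)) atTop (nhds η) := by
      have := tendsto_const_nhds (x := η) (f := atTop (α := ℕ)) |>.add
        tendsto_one_div_add_atTop_nhds_zero_nat
      simpa using this
    exact tendsto_of_tendsto_of_tendsto_of_le_of_le tendsto_const_nhds hupper
      (fun j => (hdist j).le) (fun j => hdist2 j)
end

section
/- Let (x_n) be a d-semi-Cauchy but not Cauchy sequence in a metric space, and Δ ⊆ (0,∞) countable. Then there exist η ∈ (0,∞) \ Δ and rank sequences m(j) < n(j) (with m(j) ≥ j) such that for all p, q ∈ {0,1}, d(x_{m(j)+p}, x_{n(j)+q}) → η as j → ∞. -/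
open Filter

/-- If `(x n)` is semi-Cauchy but not Cauchy in a metric space and
`Δ ⊆ (0,∞)` is countable, there exist `η ∈ (0,∞) \ Δ` and rank sequences
`m j < n j` with `j ≤ m j` such that for all `p, q ∈ {0,1}`,
`d(x (m j + p), x (n j + q)) → η` as `j → ∞`. -/
theorem semiCauchy_not_cauchy_ranks_shifted
    {X : Type*} [MetricSpace X] (x : ℕ → X)
    (hsemi : Tendsto (fun n => dist (x n) (x (n + 1))) atTop (nhds 0))
    (hnc : ¬ CauchySeq x)
    (Δ : Set ℝ) (hΔc : Δ.Countable) (hΔ : Δ ⊆ Set.Ioi 0) :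
    ∃ η : ℝ, η ∈ Set.Ioi (0:ℝ) \ Δ ∧
      ∃ m n : ℕ → ℕ, (∀ j, j ≤ m j ∧ m j < n j) ∧
        ∀ p q : ℕ, p ≤ 1 → q ≤ 1 →
          Tendsto (fun j => dist (x (m j + p)) (x (n j + q))) atTop (nhds η) := by
  rw [Metric.cauchySeq_iff] at hnc
  push_neg at hnc
  obtain ⟨ε, hε, hN⟩ := hnc
  -- pick η in (0, ε) \ Δ
  have huncount : ¬ (Set.Ioo (0:ℝ) ε).Countable := by
    intro h
    have h1 := Cardinal.mk_Ioo_real hε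
    have h2 := h.le_aleph0
    rw [h1] at h2
    exact absurd h2 (not_le.mpr Cardinal.aleph0_lt_continuum)
  have hne : (Set.Ioo (0:ℝ) ε \ Δ).Nonempty := by
    by_contra h
    rw [Set.not_nonempty_iff_eq_empty, Set.diff_eq_empty] at h
    exact huncount (hΔc.mono h)
  obtain ⟨η, hη1, hη2⟩ := hne
  have hη0 : 0 < η := hη1.1
  have hηε : η < ε := hη1.2
  -- for each j, get m and existence of larger n with big distance
  have key : ∀ j : ℕ, ∃ m, j ≤ m ∧ ∃ n, m < n ∧ η ≤ dist (x m) (x n) := by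
    intro j
    obtain ⟨a, ha, b, hb, hd⟩ := hN j
    rcases lt_trichotomy a b with h | h | h
    · exact ⟨a, ha, b, h, le_trans hηε.le hd⟩
    · exfalso; subst h; simp at hd; linarith
    · exact ⟨b, hb, a, h, by rw [dist_comm]; exact le_trans hηε.le hd⟩
  choose m hm hex using key
  set n : ℕ → ℕ := fun j => Nat.find (hex j) with hn
  have hmn : ∀ j, m j < n j := fun j => (Nat.find_spec (hex j)).1
  have hge : ∀ j, η ≤ dist (x (m j)) (x (n j)) := fun j => (Nat.find_spec (hex j)).2
  have hlt : ∀ j, dist (x (m j)) (x (n j - 1)) < η := by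
    intro j
    rcases eq_or_lt_of_le (Nat.succ_le_of_lt (hmn j)) with h | h
    · have he : n j - 1 = m j := by omega
      rw [he]
      simpa using hη0
    · have h1 : m j < n j - 1 := by omega
      have h2 := Nat.find_min (hex j) (show n j - 1 < n j by omega)
      push_neg at h2
      exact h2 h1
  -- limits of index sequences
  have hmt : Tendsto m atTop atTop := tendsto_atTop_mono hm tendsto_id
  have hnt : Tendsto n atTop atTop :=
    tendsto_atTop_mono (fun j => le_of_lt (lt_of_le_of_lt (hm j) (hmn j))) tendsto_id
  have hnt1 : Tendsto (fun j => n j - 1) atTop atTop :=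
    tendsto_atTop_mono (fun j => by have h1 := hm j; have h2 := hmn j; simp only [id_eq]; omega) tendsto_id
  -- the consecutive distance at n j - 1 tends to 0
  have hsmall : Tendsto (fun j => dist (x (n j - 1)) (x (n j))) atTop (nhds 0) := by
    refine (hsemi.comp hnt1).congr fun j => ?_
    simp only [Function.comp]
    have : n j - 1 + 1 = n j := by have := hmn j; omega
    rw [this]
  -- main limit
  have hD : Tendsto (fun j => dist (x (m j)) (x (n j))) atTop (nhds η) := by
    apply tendsto_of_tendsto_of_tendsto_of_le_of_le (g := fun _ => η)
      (h := fun j => η + dist (x (n j - 1)) (x (n j)))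
      tendsto_const_nhds (by simpa using tendsto_const_nhds.add hsmall)
      (fun j => hge j)
    intro j
    calc dist (x (m j)) (x (n j))
        ≤ dist (x (m j)) (x (n j - 1)) + dist (x (n j - 1)) (x (n j)) := dist_triangle _ _ _
      _ ≤ η + dist (x (n j - 1)) (x (n j)) := by linarith [hlt j]
  -- auxiliary: shifted consecutive distances tend to 0
  have aux : ∀ (k : ℕ → ℕ), Tendsto k atTop atTop → ∀ p : ℕ, p ≤ 1 →
      Tendsto (fun j => dist (x (k j)) (x (k j + p))) atTop (nhds 0) := by
    intro k hk p hp
    interval_cases p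
    · simpa using (tendsto_const_nhds : Tendsto (fun _ : ℕ => (0:ℝ)) atTop (nhds 0))
    · exact hsemi.comp hk
  refine ⟨η, ⟨hη1.1, hη2⟩, m, n, fun j => ⟨hm j, hmn j⟩, ?_⟩
  intro p q hp hq
  have hdiff : Tendsto
      (fun j => dist (x (m j + p)) (x (n j + q)) - dist (x (m j)) (x (n j)))
      atTop (nhds 0) := by
    apply squeeze_zero_norm (a := fun j => dist (x (m j)) (x (m j + p)) + dist (x (n j)) (x (n j + q)))
    · intro j
      rw [Real.norm_eq_abs, ← Real.dist_eq]
      calc dist (dist (x (m j + p)) (x (n j + q))) (dist (x (m j)) (x (n j)))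
          ≤ dist (x (m j + p)) (x (m j)) + dist (x (n j + q)) (x (n j)) :=
            dist_dist_dist_le _ _ _ _
        _ = dist (x (m j)) (x (m j + p)) + dist (x (n j)) (x (n j + q)) := by
            rw [dist_comm (x (m j + p)), dist_comm (x (n j + q))]
    · simpa using (aux m hmt p hp).add (aux n hnt q hq)
  have := hdiff.add hD
  simpa using this
end

section
/- Let T be (a,F)-contractive on a metric space (X,d), for some a > 0 and Wardowski function F, and let x₀ ∈ X with x_n := Tⁿx₀ satisfying x_n ≠ x_{n+1} for all n. Then, with ρ_n := d(x_n, x_{n+1}), one has F(ρ_n) ≤ F(ρ_0) − n·a for all n, F(ρ_n) → −∞, and ρ_n → 0. -/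
open Filter

/-- Let `T` be `(a,F)`-contractive for a Wardowski function `F`, and
`x n = Tⁿ x₀` with `x n ≠ x (n+1)` for all `n`. With `ρ n = d(x n, x (n+1))`:
`F (ρ n) ≤ F (ρ 0) - n·a` for all `n`, `F (ρ n) → -∞`, and `ρ n → 0`. -/
theorem wardowski_orbit_distances
    {X : Type*} [MetricSpace X] (T : X → X)
    (F : ℝ → EReal)
    (hfin : ∀ t, 0 ≤ t → F t < ⊤)
    (hbot : ∀ t, 0 ≤ t → (F t = ⊥ ↔ t = 0))
    (hmono : ∀ s t, 0 ≤ s → s < t → F s < F t)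
    (hlim : Tendsto F (nhdsWithin 0 (Set.Ioi 0)) (nhds ⊥))
    (a : ℝ) (ha : 0 < a)
    (hcontr : ∀ x y : X, x ≠ y → (a : EReal) + F (dist (T x) (T y)) ≤ F (dist x y))
    (x₀ : X) (hne : ∀ n : ℕ, T^[n] x₀ ≠ T^[n + 1] x₀)
    (ρ : ℕ → ℝ) (hρ : ∀ n, ρ n = dist (T^[n] x₀) (T^[n + 1] x₀)) :
    (∀ n : ℕ, F (ρ n) ≤ F (ρ 0) - ((n : ℝ) * a : ℝ)) ∧
    Tendsto (fun n => F (ρ n)) atTop (nhds ⊥) ∧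
    Tendsto ρ atTop (nhds 0) := by
  have hρpos : ∀ n, 0 < ρ n := fun n => by
    rw [hρ n]; exact dist_pos.mpr (hne n)
  have hρnn : ∀ n, 0 ≤ ρ n := fun n => (hρpos n).le
  have hFnebot : ∀ n, F (ρ n) ≠ ⊥ := fun n => by
    intro h
    exact (hρpos n).ne' ((hbot _ (hρnn n)).mp h)
  have hFlt : ∀ n, F (ρ n) < ⊤ := fun n => hfin _ (hρnn n)
  -- step inequality
  have hstep : ∀ n, (a : EReal) + F (ρ (n + 1)) ≤ F (ρ n) := by
    intro n
    have h := hcontr (T^[n] x₀) (T^[n + 1] x₀) (hne n)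
    rw [hρ n, hρ (n + 1)]
    simpa [← Function.iterate_succ_apply' T] using h
  -- F (ρ n) is a real number
  have hcoe : ∀ n, F (ρ n) = ((F (ρ n)).toReal : EReal) := fun n =>
    (EReal.coe_toReal (hFlt n).ne (hFnebot n)).symm
  set c : ℝ := (F (ρ 0)).toReal with hc
  have hmain : ∀ n : ℕ, F (ρ n) ≤ ((c - n * a : ℝ) : EReal) := by
    intro n
    induction n with
    | zero => rw [Nat.cast_zero, zero_mul, sub_zero, hcoe 0]
    | succ n ih =>
      have h1 : (a : EReal) + F (ρ (n + 1)) ≤ ((c - n * a : ℝ) : EReal) :=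
        le_trans (hstep n) ih
      rw [hcoe (n + 1)] at h1 ⊢
      rw [← EReal.coe_add, EReal.coe_le_coe_iff] at h1
      rw [EReal.coe_le_coe_iff]
      push_cast
      linarith
  have hfirst : ∀ n : ℕ, F (ρ n) ≤ F (ρ 0) - ((n : ℝ) * a : ℝ) := by
    intro n
    have := hmain n
    rw [hcoe 0, ← hc, ← EReal.coe_sub]
    exact this
  have hb : Tendsto (fun n : ℕ => (c - n * a : ℝ)) atTop atBot := by
    simp only [sub_eq_add_neg]
    exact tendsto_atBot_add_const_left _ c
      (tendsto_neg_atTop_atBot.comp (tendsto_natCast_atTop_atTop.atTop_mul_const ha))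
  have hb' : Tendsto (fun n : ℕ => ((c - n * a : ℝ) : EReal)) atTop (nhds ⊥) := by
    rw [EReal.tendsto_nhds_bot_iff_real]
    intro x
    filter_upwards [hb.eventually (eventually_lt_atBot x)] with n hn
    exact_mod_cast hn
  have hFtend : Tendsto (fun n => F (ρ n)) atTop (nhds ⊥) :=
    tendsto_nhds_bot_mono' hb' hmain
  refine ⟨hfirst, hFtend, ?_⟩
  · -- ρ → 0
    rw [Metric.tendsto_atTop]
    intro ε hε
    have hFε : (⊥ : EReal) < F ε := by
      rcases lt_or_eq_of_le (bot_le : (⊥ : EReal) ≤ F ε) with h | h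
      · exact h
      · exact absurd ((hbot ε hε.le).mp h.symm) hε.ne'
    have hev : ∀ᶠ n in atTop, F (ρ n) < F ε := by
      have : Set.Iio (F ε) ∈ nhds (⊥ : EReal) := Iio_mem_nhds hFε
      exact hFtend.eventually_mem this
    rcases hev.exists_forall_of_atTop with ⟨N, hN⟩
    refine ⟨N, fun n hn => ?_⟩
    rw [Real.dist_eq, sub_zero, abs_of_nonneg (hρnn n)]
    by_contra hle
    push_neg at hle
    rcases lt_or_eq_of_le hle with h | h
    · exact absurd (hmono _ _ hε.le h) (not_lt.mpr (hN n hn).le)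
    · rw [h] at hN
      exact lt_irrefl _ (hN n hn)
end

section
/- If (ρ_n) is a sequence of positive reals converging to 0 and F is a k-regular Wardowski function (k ∈ (0,1)) such that n·a·ρ_n^k ≤ [F(ρ_0) − F(ρ_n)]·ρ_n^k for all n, where a > 0, then Σ_n ρ_n < ∞. -/
open Filter

/-- If `(ρ n)` are positive reals tending to `0`, `F` is a
`k`-regular Wardowski function (`k ∈ (0,1)`), `a > 0`, and
`n·a·ρₙ^k ≤ (F(ρ₀) − F(ρₙ))·ρₙ^k` for all `n`, then `Σ ρ n < ∞`. -/
theorem wardowski_regular_summable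
    (F : ℝ → EReal)
    (hfin : ∀ t, 0 ≤ t → F t < ⊤)
    (hbot : ∀ t, 0 ≤ t → (F t = ⊥ ↔ t = 0))
    (hmono : ∀ s t, 0 ≤ s → s < t → F s < F t)
    (hlim : Tendsto F (nhdsWithin 0 (Set.Ioi 0)) (nhds ⊥))
    (k : ℝ) (hk : k ∈ Set.Ioo (0:ℝ) 1)
    (hreg : Tendsto (fun t : ℝ => ((t ^ k : ℝ) : EReal) * F t)
      (nhdsWithin 0 (Set.Ioi 0)) (nhds 0))
    (a : ℝ) (ha : 0 < a)
    (ρ : ℕ → ℝ) (hρpos : ∀ n, 0 < ρ n)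
    (hρ0 : Tendsto ρ atTop (nhds 0))
    (hineq : ∀ n : ℕ,
      (((n : ℝ) * a * ρ n ^ k : ℝ) : EReal) ≤
        (F (ρ 0) - F (ρ n)) * ((ρ n ^ k : ℝ) : EReal)) :
    Summable ρ := by
  obtain ⟨hk0, hk1⟩ := hk
  -- F (ρ n) is a real number
  have hne_bot : ∀ n, F (ρ n) ≠ ⊥ := fun n => by
    intro h
    exact (hρpos n).ne' ((hbot _ (hρpos n).le).mp h)
  have hne_top : ∀ n, F (ρ n) ≠ ⊤ := fun n => (hfin _ (hρpos n).le).ne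
  set f : ℕ → ℝ := fun n => (F (ρ n)).toReal with hf
  have hFf : ∀ n, F (ρ n) = ((f n : ℝ) : EReal) := fun n =>
    (EReal.coe_toReal (hne_top n) (hne_bot n)).symm
  set c : ℝ := f 0 with hc
  -- real form of the inequality
  have hineqR : ∀ n : ℕ, (n : ℝ) * a * ρ n ^ k ≤ (c - f n) * ρ n ^ k := by
    intro n
    have h := hineq n
    rw [hFf n, hFf 0, ← EReal.coe_sub, ← EReal.coe_mul, EReal.coe_le_coe_iff] at h
    exact h
  -- ρ tends to 0 within Ioi 0
  have hρ0' : Tendsto ρ atTop (nhdsWithin 0 (Set.Ioi 0)) :=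
    tendsto_nhdsWithin_of_tendsto_nhds_of_eventually_within _ hρ0
      (Eventually.of_forall fun n => hρpos n)
  -- ρ n ^ k → 0
  have hrk : Tendsto (fun n => ρ n ^ k) atTop (nhds 0) := by
    have := hρ0.rpow_const (p := k) (Or.inr hk0.le)
    rwa [Real.zero_rpow hk0.ne'] at this
  -- (ρ n ^ k) * f n → 0
  have hmul : Tendsto (fun n => ρ n ^ k * f n) atTop (nhds 0) := by
    have h1 : Tendsto (fun n => ((ρ n ^ k : ℝ) : EReal) * F (ρ n)) atTop (nhds 0) :=
      hreg.comp hρ0'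
    have h2 : Tendsto (fun n => ((((ρ n ^ k : ℝ) : EReal)) * F (ρ n)).toReal) atTop
        (nhds ((0 : EReal).toReal)) :=
      (EReal.tendsto_toReal (by simp) (by simp)).comp h1
    have heq : ∀ n, ((((ρ n ^ k : ℝ) : EReal) * F (ρ n)).toReal) = ρ n ^ k * f n := by
      intro n
      rw [EReal.toReal_mul, EReal.toReal_coe]
    simpa only [heq, EReal.toReal_zero] using h2
  -- RHS → 0
  have hRHS : Tendsto (fun n => (c - f n) * ρ n ^ k) atTop (nhds 0) := by
    have : ∀ n, (c - f n) * ρ n ^ k = c * ρ n ^ k - ρ n ^ k * f n := fun n => by ring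
    simp only [this]
    simpa using ((hrk.const_mul c).sub hmul)
  -- eventually RHS ≤ a
  have hev : ∀ᶠ n in atTop, (c - f n) * ρ n ^ k ≤ a := by
    filter_upwards [hRHS.eventually (eventually_le_nhds ha)] with n hn using hn
  -- hence eventually ρ n ≤ ((n : ℝ) ^ (1/k))⁻¹
  have hbound : ∀ᶠ n in atTop, ρ n ≤ (((n : ℝ)) ^ (1/k))⁻¹ := by
    filter_upwards [hev, eventually_ge_atTop 1] with n hn hn1
    have hnpos : (0 : ℝ) < n := by exact_mod_cast hn1
    have h1 : (n : ℝ) * a * ρ n ^ k ≤ a := le_trans (hineqR n) hn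
    have hxpos : 0 < ρ n ^ k := Real.rpow_pos_of_pos (hρpos n) k
    have hx : ρ n ^ k * (n : ℝ) ≤ 1 := by nlinarith
    have h2 : ρ n ^ k ≤ ((n : ℝ))⁻¹ := by
      rw [inv_eq_one_div, le_div_iff₀ hnpos]; exact hx
    have h3 : (ρ n ^ k) ^ (1/k) ≤ (((n : ℝ))⁻¹) ^ (1/k) :=
      Real.rpow_le_rpow hxpos.le h2 (by positivity)
    have h4 : (ρ n ^ k) ^ (1/k) = ρ n := by
      rw [← Real.rpow_mul (hρpos n).le, mul_one_div, div_self hk0.ne', Real.rpow_one]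
    rw [h4, Real.inv_rpow hnpos.le] at h3
    exact h3
  -- the comparison series is summable
  have hsum : Summable (fun n : ℕ => (((n : ℝ)) ^ (1/k))⁻¹) :=
    Real.summable_nat_rpow_inv.mpr (by rw [one_div]; exact (one_lt_inv_iff₀).mpr ⟨hk0, hk1⟩)
  obtain ⟨N, hN⟩ := eventually_atTop.mp hbound
  rw [← summable_nat_add_iff N]
  exact Summable.of_nonneg_of_le (fun m => (hρpos _).le)
    (fun m => hN (m + N) (Nat.le_add_left N m))
    ((summable_nat_add_iff N).mpr hsum)
end
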